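/- arXiv:1202.5025 — 3 statements merged into one kernel-verified Lean document; each statement's English description precedes it below -/
import Mathlib

section
/- For a connected graph on n vertices, the sum over all vertices v of Σ_{e∈E} rel(e,v) divided by the number of edges m is at most n times the diameter of the bridge tree; i.e., (1/m)·Σ_{v∈V} R(v) ≤ n·diam(bridge tree). -/
/-!
An edge `e` separates `v` from `w` only if it is a bridge, and in a connected graph every bridge
is an edge. Counting the pairs `(e, w)` with `e` separating `v` from `w` in two ways therefore gives
`R(v) = ∑_w d(v, w)`, where `d(v, w)` is the number of bridges separating `v` and `w`, i.e. the
bridge-tree distance. Each of the `n - 1` terms with `w ≠ v` is at most the bridge-tree diameter,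
so `∑_v R(v) ≤ n (n - 1) diam ≤ n m diam` because a connected graph has `n - 1 ≤ m`.
-/

open SimpleGraph

/-- Separation of an edge: number of ordered vertex pairs disconnected by removing it. -/
noncomputable def sep {V : Type*} (G : SimpleGraph V) (e : Sym2 V) : ℕ :=
  Nat.card {p : V × V // ¬ (G.deleteEdges {e}).Reachable p.1 p.2}

/-- Relevance of an edge for a vertex: number of vertices reachable from `v` only through `e`. -/
noncomputable def rel {V : Type*} (G : SimpleGraph V) (e : Sym2 V) (v : V) : ℕ :=
  Nat.card {w : V // ¬ (G.deleteEdges {e}).Reachable v w}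

/-- Sum of relevances for a vertex. -/
noncomputable def RSum {V : Type*} (G : SimpleGraph V) (v : V) : ℕ :=
  ∑ᶠ e ∈ G.edgeSet, rel G e v

/-- Number of bridges separating `u` from `v`; this is the distance in the bridge tree
between the bridgeless connected components of `u` and `v`. -/
noncomputable def bridgeDist {V : Type*} (G : SimpleGraph V) (u v : V) : ℕ :=
  Nat.card {e : Sym2 V // G.IsBridge e ∧ ¬ (G.deleteEdges {e}).Reachable u v}

/-- Diameter of the bridge tree of `G`. -/
noncomputable def bridgeTreeDiam {V : Type*} [Fintype V] (G : SimpleGraph V) : ℕ :=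
  Finset.univ.sup fun p : V × V => bridgeDist G p.1 p.2

open Finset

namespace SimpleGraph.Connected

variable {V : Type*} {G : SimpleGraph V}

lemma isBridge_of_not_reachable_deleteEdges (hG : G.Connected) {e : Sym2 V} {v w : V}
    (h : ¬ (G.deleteEdges {e}).Reachable v w) : G.IsBridge e := by
  induction e using Sym2.inductionOn with
  | hf x y =>
    by_contra hbr
    exact h ((hG.connected_delete_edge_of_not_isBridge hbr).preconnected v w)

lemma mem_edgeSet_of_isBridge (hG : G.Connected) {e : Sym2 V} (he : G.IsBridge e) :
    e ∈ G.edgeSet := by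
  by_contra hne
  induction e using Sym2.inductionOn with
  | hf x y =>
    rw [isBridge_iff, deleteEdges_eq_self.mpr (Set.disjoint_singleton_right.mpr hne)] at he
    exact he (hG.preconnected x y)

end SimpleGraph.Connected

lemma bridgeDist_self {V : Type*} (G : SimpleGraph V) (v : V) : bridgeDist G v v = 0 :=
  Nat.card_eq_zero.mpr (.inl ⟨fun e => e.2.2 (Reachable.refl v)⟩)

section BridgeTree

variable {V : Type*} [Fintype V] {G : SimpleGraph V}

lemma bridgeDist_le_bridgeTreeDiam (u v : V) : bridgeDist G u v ≤ bridgeTreeDiam G :=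
  Finset.le_sup (f := fun p : V × V => bridgeDist G p.1 p.2) (mem_univ (u, v))

lemma RSum_eq_sum_bridgeDist (hG : G.Connected) (v : V) :
    RSum G v = ∑ w, bridgeDist G v w := by
  classical
  let separates (e : Sym2 V) (w : V) : Prop := ¬ (G.deleteEdges {e}).Reachable v w
  have hrel (e : Sym2 V) : rel G e v = #(univ.bipartiteAbove separates e) := by
    rw [rel, Nat.card_eq_fintype_card, Fintype.card_subtype]; rfl
  have hbridgeDist (w : V) : bridgeDist G v w = #(G.edgeFinset.bipartiteBelow separates w) := by
    rw [bridgeDist, ← Nat.card_eq_finsetCard]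
    refine Nat.card_congr (Equiv.subtypeEquivRight fun e => ?_)
    simp only [bipartiteBelow, mem_filter, mem_edgeFinset]
    exact ⟨fun ⟨hbr, hsep⟩ => ⟨hG.mem_edgeSet_of_isBridge hbr, hsep⟩,
      fun ⟨_, hsep⟩ => ⟨hG.isBridge_of_not_reachable_deleteEdges hsep, hsep⟩⟩
  rw [RSum, ← coe_edgeFinset, finsum_mem_coe_finset]
  simp only [hrel, hbridgeDist]
  exact sum_card_bipartiteAbove_eq_sum_card_bipartiteBelow separates

lemma RSum_le_card_sub_one_mul (hG : G.Connected) (v : V) :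
    RSum G v ≤ (Fintype.card V - 1) * bridgeTreeDiam G := by
  classical
  rw [RSum_eq_sum_bridgeDist hG, ← sum_erase univ (bridgeDist_self G v), ← card_univ,
    ← card_erase_of_mem (mem_univ v), ← smul_eq_mul]
  exact sum_le_card_nsmul _ _ _ fun w _ => bridgeDist_le_bridgeTreeDiam v w

lemma sum_RSum_le (hG : G.Connected) :
    ∑ v, RSum G v ≤ Fintype.card V * bridgeTreeDiam G * Nat.card G.edgeSet := by
  have hcard : Fintype.card V - 1 ≤ Nat.card G.edgeSet := by
    have := hG.card_vert_le_card_edgeSet_add_one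
    rw [Nat.card_eq_fintype_card] at this
    omega
  calc ∑ v, RSum G v ≤ ∑ _v : V, (Fintype.card V - 1) * bridgeTreeDiam G :=
        sum_le_sum fun v _ => RSum_le_card_sub_one_mul hG v
    _ = Fintype.card V * ((Fintype.card V - 1) * bridgeTreeDiam G) := by
        rw [sum_const, card_univ, smul_eq_mul]
    _ ≤ Fintype.card V * bridgeTreeDiam G * Nat.card G.edgeSet := by
        rw [mul_comm (_ - 1), ← mul_assoc]
        exact Nat.mul_le_mul_left _ hcard

end BridgeTree

/-- `(1/m)·Σ_v R(v) ≤ n·diam(bridge tree)`. -/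
theorem stmt_5 {V : Type*} [Fintype V] (G : SimpleGraph V) (hG : G.Connected) :
    (∑ᶠ v : V, (RSum G v : ℝ)) / (Nat.card G.edgeSet : ℝ) ≤
      (Fintype.card V : ℝ) * (bridgeTreeDiam G : ℝ) := by
  rw [finsum_eq_sum_of_fintype]
  refine div_le_of_le_mul₀ (Nat.cast_nonneg _) (by positivity) ?_
  exact_mod_cast sum_RSum_le hG
end

section
/- Among connected graphs on n vertices, if α ≤ 2(n−1) the cycle minimizes social cost mα + Σ_e sep(e)·P(e) (with value nα); if α ≥ 2(n−1), the star minimizes it (with value (n−1)(α+2)). In particular the optimum social cost is Θ(nα). (Here P is any probability distribution on edges, and for a tree Σ_e sep(e)P(e) ≥ 2(n−1); the cycle has total disconnection cost 0.) -/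
open SimpleGraph

/-- Social cost: total building cost `mα` plus expected separation `Σ_e sep(e)·p(e)`. -/
noncomputable def SC {V : Type*} (G : SimpleGraph V) (p : Sym2 V → ℝ) (α : ℝ) : ℝ :=
  (Nat.card G.edgeSet : ℝ) * α + ∑ᶠ e ∈ G.edgeSet, (sep G e : ℝ) * p e

/-- `p` is a probability distribution on the edges of `G`. -/
def IsEdgeProb {V : Type*} (G : SimpleGraph V) (p : Sym2 V → ℝ) : Prop :=
  (∀ e, 0 ≤ p e) ∧ ∑ᶠ e ∈ G.edgeSet, p e = 1

/-- The star on `n` vertices, centered at vertex `0`. -/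
def starGraph (n : ℕ) : SimpleGraph (Fin n) where
  Adj i j := i ≠ j ∧ (i.val = 0 ∨ j.val = 0)
  symm := ⟨by rintro i j ⟨h1, h2⟩; exact ⟨h1.symm, h2.symm⟩⟩
  loopless := ⟨fun i h => h.1 rfl⟩

/-!
A connected graph on `n` vertices is either a tree, with `n - 1` edges all of which are bridges,
or has at least `n` edges. Deleting a bridge of a connected graph leaves exactly two components,
of sizes `a` and `n - a` with `0 < a < n`, so the bridge separates `2a(n - a) ≥ 2(n - 1)` ordered
pairs. Hence a tree costs at least `(n - 1)(α + 2)` and any other connected graph at least `nα`.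
The cycle attains `nα` because its edges lie on a cycle and so separate nothing; the star attains
`(n - 1)(α + 2)` because each of its edges cuts off a single leaf.
-/

namespace SimpleGraph

variable {V : Type*} {G H : SimpleGraph V}

theorem Preconnected.reachable_deleteEdges_or (hG : G.Preconnected) (u v w : V) :
    (G.deleteEdges {s(u, v)}).Reachable u w ∨ (G.deleteEdges {s(u, v)}).Reachable v w := by
  set H := G.deleteEdges {s(u, v)}
  suffices ∀ x, G.Walk x w → H.Reachable u x ∨ H.Reachable v x →
      H.Reachable u w ∨ H.Reachable v w from this u (hG u w).some (Or.inl .rfl)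
  intro x p
  induction p with
  | nil => exact id
  | @cons x y _ hxy _ ih =>
    intro hx
    apply ih
    by_cases he : s(x, y) = s(u, v)
    · rcases Sym2.eq_iff.mp he with ⟨-, rfl⟩ | ⟨-, rfl⟩
      exacts [Or.inr .rfl, Or.inl .rfl]
    · have hxy' : H.Adj x y := by simp [H, hxy, he]
      exact hx.imp (·.trans hxy'.reachable) (·.trans hxy'.reachable)

theorem card_not_reachable_of_reachable_or [Finite V] {u v : V}
    (hcover : ∀ w, H.Reachable u w ∨ H.Reachable v w) :
    Nat.card {p : V × V // ¬ H.Reachable p.1 p.2} =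
      2 * Nat.card {w // H.Reachable u w} * (Nat.card V - Nat.card {w // H.Reachable u w}) := by
  classical
  have := Fintype.ofFinite V
  have hsplit : ∀ a b, ¬ H.Reachable a b ↔ (H.Reachable u a ↔ ¬ H.Reachable u b) := by
    intro a b
    constructor
    · intro hab
      by_cases ha : H.Reachable u a <;> by_cases hb : H.Reachable u b
      · exact absurd (ha.symm.trans hb) hab
      · tauto
      · tauto
      · exact absurd (((hcover a).resolve_left ha).symm.trans ((hcover b).resolve_left hb)) hab
    · intro h hab
      by_cases ha : H.Reachable u a
      · exact h.mp ha (ha.trans hab)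
      · exact ha ((h.not_left.mp ha).trans hab.symm)
  set A := Finset.univ.filter (H.Reachable u)
  have hpairs : Finset.univ.filter (fun p : V × V => ¬ H.Reachable p.1 p.2) =
      A ×ˢ Aᶜ ∪ Aᶜ ×ˢ A := by
    ext ⟨a, b⟩
    simp only [Finset.mem_filter, Finset.mem_univ, true_and, Finset.mem_union,
      Finset.mem_product, Finset.mem_compl, A]
    rw [hsplit]
    tauto
  have hdisj : Disjoint (A ×ˢ Aᶜ) (Aᶜ ×ˢ A) :=
    Finset.disjoint_left.mpr fun p hp hp' =>
      (Finset.mem_compl.mp (Finset.mem_product.mp hp').1) (Finset.mem_product.mp hp).1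
  simp only [Nat.card_eq_fintype_card, Fintype.card_subtype, hpairs,
    Finset.card_union_of_disjoint hdisj, Finset.card_product, Finset.card_compl]
  ring

theorem Preconnected.sep_eq [Finite V] (hG : G.Preconnected) (u v : V) :
    sep G s(u, v) = 2 * Nat.card {w // (G.deleteEdges {s(u, v)}).Reachable u w} *
      (Nat.card V - Nat.card {w // (G.deleteEdges {s(u, v)}).Reachable u w}) :=
  card_not_reachable_of_reachable_or (hG.reachable_deleteEdges_or u v)

theorem Preconnected.two_mul_le_sep_of_isBridge [Finite V] (hG : G.Preconnected) {e : Sym2 V}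
    (he : G.IsBridge e) : 2 * (Nat.card V - 1) ≤ sep G e := by
  classical
  induction e with | h u v =>
  have := Fintype.ofFinite V
  have hu : 0 < Nat.card {w // (G.deleteEdges {s(u, v)}).Reachable u w} :=
    Nat.card_pos_iff.mpr ⟨⟨⟨u, .rfl⟩⟩, inferInstance⟩
  have hv : Nat.card {w // (G.deleteEdges {s(u, v)}).Reachable u w} < Nat.card V := by
    simp only [Nat.card_eq_fintype_card]
    exact Fintype.card_subtype_lt he
  rw [hG.sep_eq]
  generalize Nat.card {w // (G.deleteEdges {s(u, v)}).Reachable u w} = a at hu hv ⊢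
  obtain ⟨b, hb⟩ := Nat.exists_eq_add_of_lt hv
  rw [hb, show a + b + 1 - a = b + 1 by omega, Nat.add_sub_cancel]
  nlinarith

theorem Connected.sep_eq_zero_of_not_isBridge (hG : G.Connected) {e : Sym2 V}
    (he : ¬ G.IsBridge e) : sep G e = 0 := by
  induction e with | h u v =>
  have hconn := hG.connected_delete_edge_of_not_isBridge he
  have : IsEmpty {p : V × V // ¬ (G.deleteEdges {s(u, v)}).Reachable p.1 p.2} :=
    ⟨fun p => p.2 (hconn.preconnected _ _)⟩
  exact Nat.card_of_isEmpty

theorem sep_starGraph [Finite V] {r : V} {e : Sym2 V} (he : e ∈ (starGraph r).edgeSet) :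
    sep (starGraph r) e = 2 * (Nat.card V - 1) := by
  induction e with | h x y =>
  wlog hy : y = r generalizing x y
  · rw [Sym2.eq_swap] at he ⊢
    exact this y x he ((starGraph_adj.mp he).2.resolve_left hy)
  subst hy
  have hxy : x ≠ y := (starGraph_adj.mp he).1
  have hisolated : ((starGraph y).deleteEdges {s(x, y)}).neighborSet x = ∅ := by
    ext w
    simp only [mem_neighborSet, deleteEdges_adj, starGraph_adj, Set.mem_singleton_iff,
      Set.mem_empty_iff_false, iff_false]
    rintro ⟨⟨-, h | rfl⟩, hne⟩
    exacts [hxy h, hne rfl]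
  have hx : ∀ w, ((starGraph y).deleteEdges {s(x, y)}).Reachable x w → w = x := fun w hw =>
    by_contra fun hw' => not_reachable_of_neighborSet_left_eq_empty (Ne.symm hw') hisolated hw
  have hleaf : Nat.card {w // ((starGraph y).deleteEdges {s(x, y)}).Reachable x w} = 1 :=
    Nat.card_eq_one_iff_unique.mpr
      ⟨⟨fun a b => Subtype.ext ((hx a a.2).trans (hx b b.2).symm)⟩, ⟨⟨x, .rfl⟩⟩⟩
  rw [(connected_starGraph y).preconnected.sep_eq, hleaf, mul_one]

theorem card_edgeFinset_cycleGraph (n : ℕ) : (cycleGraph (n + 3)).edgeFinset.card = n + 3 := by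
  have h := sum_degrees_eq_twice_card_edges (cycleGraph (n + 3))
  simp only [cycleGraph_degree_three_le, Finset.sum_const, Finset.card_univ, Fintype.card_fin,
    smul_eq_mul] at h
  omega

theorem cycleGraph.mem_edges_cycle {n : ℕ} {e : Sym2 (Fin (n + 3))}
    (he : e ∈ (cycleGraph (n + 3)).edgeSet) : e ∈ (cycleGraph.cycle n).edges := by
  have hnodup := (cycleGraph.isCycle_cycle (n := n)).edges_nodup
  have hsub : (cycleGraph.cycle n).edges.toFinset ⊆ (cycleGraph (n + 3)).edgeFinset := fun e h =>
    mem_edgeFinset.mpr ((cycleGraph.cycle n).edges_subset_edgeSet (List.mem_toFinset.mp h))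
  have heq := Finset.eq_of_subset_of_card_le hsub (by
    rw [card_edgeFinset_cycleGraph, List.toFinset_card_of_nodup hnodup, Walk.length_edges,
      cycleGraph.length_cycle])
  exact List.mem_toFinset.mp (heq ▸ mem_edgeFinset.mpr he)

theorem not_isBridge_cycleGraph {n : ℕ} {e : Sym2 (Fin (n + 3))}
    (he : e ∈ (cycleGraph (n + 3)).edgeSet) : ¬ (cycleGraph (n + 3)).IsBridge e :=
  fun hb => hb.notMem_edges_of_isCycle cycleGraph.isCycle_cycle (cycleGraph.mem_edges_cycle he)

end SimpleGraph

section SocialCost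

variable {V : Type*} {G : SimpleGraph V} {p : Sym2 V → ℝ}

theorem IsEdgeProb.finsum_mul_eq (hp : IsEdgeProb G p) {f : Sym2 V → ℝ} {c : ℝ}
    (hf : ∀ e ∈ G.edgeSet, f e = c) : ∑ᶠ e ∈ G.edgeSet, f e * p e = c := by
  rw [finsum_mem_congr rfl fun e he => by rw [hf e he], ← mul_finsum_mem, hp.2, mul_one]

theorem IsEdgeProb.le_finsum_mul [Finite V] (hp : IsEdgeProb G p) {f : Sym2 V → ℝ} {c : ℝ}
    (hf : ∀ e ∈ G.edgeSet, c ≤ f e) : c ≤ ∑ᶠ e ∈ G.edgeSet, f e * p e := by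
  have hfin := G.edgeSet.toFinite
  calc c = ∑ᶠ e ∈ G.edgeSet, c * p e := by rw [← mul_finsum_mem, hp.2, mul_one]
    _ ≤ ∑ᶠ e ∈ G.edgeSet, f e * p e := by
      rw [finsum_mem_eq_finite_toFinset_sum _ hfin, finsum_mem_eq_finite_toFinset_sum _ hfin]
      exact Finset.sum_le_sum fun e he =>
        mul_le_mul_of_nonneg_right (hf e (hfin.mem_toFinset.mp he)) (hp.1 e)

theorem SimpleGraph.IsTree.natCard_edgeSet_eq [Finite V] (hG : G.IsTree) :
    (Nat.card G.edgeSet : ℝ) = Nat.card V - 1 := by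
  have h := (isTree_iff_connected_and_card.mp hG).2
  rw [← h]
  push_cast
  ring

theorem SimpleGraph.IsTree.le_SC [Finite V] (hG : G.IsTree) (hp : IsEdgeProb G p) (α : ℝ) :
    ((Nat.card V : ℝ) - 1) * (α + 2) ≤ SC G p α := by
  have := hG.connected.nonempty
  have hsep : 2 * ((Nat.card V : ℝ) - 1) ≤ ∑ᶠ e ∈ G.edgeSet, (sep G e : ℝ) * p e := by
    refine hp.le_finsum_mul fun e he => ?_
    have h := hG.connected.preconnected.two_mul_le_sep_of_isBridge
      (isAcyclic_iff_forall_isBridge.mp hG.isAcyclic he)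
    rw [← Nat.cast_le (α := ℝ), Nat.cast_mul, Nat.cast_sub Nat.card_pos] at h
    exact_mod_cast h
  rw [SC, hG.natCard_edgeSet_eq]
  linarith

theorem SimpleGraph.Connected.le_SC_of_not_isTree [Finite V] (hG : G.Connected)
    (hT : ¬ G.IsTree) (hp : IsEdgeProb G p) {α : ℝ} (hα : 0 ≤ α) :
    (Nat.card V : ℝ) * α ≤ SC G p α := by
  have hm : Nat.card V ≤ Nat.card G.edgeSet := by
    have := hG.card_vert_le_card_edgeSet_add_one
    have := mt (isTree_iff_connected_and_card.mpr ⟨hG, ·⟩) hT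
    omega
  have hsep : 0 ≤ ∑ᶠ e ∈ G.edgeSet, (sep G e : ℝ) * p e :=
    hp.le_finsum_mul fun e _ => Nat.cast_nonneg _
  rw [SC]
  have : (Nat.card V : ℝ) * α ≤ Nat.card G.edgeSet * α := by gcongr
  linarith

theorem SimpleGraph.Connected.min_le_SC [Finite V] (hG : G.Connected) (hp : IsEdgeProb G p)
    {α : ℝ} (hα : 0 ≤ α) :
    min ((Nat.card V : ℝ) * α) (((Nat.card V : ℝ) - 1) * (α + 2)) ≤ SC G p α := by
  by_cases hT : G.IsTree
  · exact (min_le_right _ _).trans (hT.le_SC hp α)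
  · exact (min_le_left _ _).trans (hG.le_SC_of_not_isTree hT hp hα)

theorem SC_starGraph [Finite V] (r : V) (hp : IsEdgeProb (SimpleGraph.starGraph r) p) (α : ℝ) :
    SC (SimpleGraph.starGraph r) p α = ((Nat.card V : ℝ) - 1) * (α + 2) := by
  have := (isTree_starGraph r).connected.nonempty
  rw [SC, (isTree_starGraph r).natCard_edgeSet_eq,
    hp.finsum_mul_eq (c := 2 * ((Nat.card V : ℝ) - 1)) fun e he => by
      rw [sep_starGraph he, Nat.cast_mul, Nat.cast_sub Nat.card_pos]
      push_cast
      ring]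
  ring

theorem SC_cycleGraph {n : ℕ} {p : Sym2 (Fin (n + 3)) → ℝ}
    (hp : IsEdgeProb (cycleGraph (n + 3)) p) (α : ℝ) :
    SC (cycleGraph (n + 3)) p α = ((n + 3 : ℕ) : ℝ) * α := by
  rw [SC, hp.finsum_mul_eq (c := 0) fun e he => by
    rw [cycleGraph_connected.sep_eq_zero_of_not_isBridge (not_isBridge_cycleGraph he),
      Nat.cast_zero], Nat.card_eq_fintype_card, ← edgeFinset_card, card_edgeFinset_cycleGraph,
    add_zero]

end SocialCost

theorem starGraph_eq_starGraph_zero (n : ℕ) [NeZero n] :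
    _root_.starGraph n = SimpleGraph.starGraph 0 := by
  ext i j
  rw [starGraph_adj, ← Fin.val_eq_zero_iff, ← Fin.val_eq_zero_iff]
  rfl

/-- Among connected graphs on `n` vertices and edge probability distributions,
the cycle is optimal for `α ≤ 2(n−1)` (social cost `nα`), and the star is optimal for
`α ≥ 2(n−1)` (social cost `(n−1)(α+2)`). -/
theorem stmt_16 (n : ℕ) (hn : 3 ≤ n) (α : ℝ) (hα : 0 < α) :
    (α ≤ 2 * ((n : ℝ) - 1) →
      ((∀ G : SimpleGraph (Fin n), G.Connected → ∀ p, IsEdgeProb G p →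
          (n : ℝ) * α ≤ SC G p α) ∧
        (cycleGraph n).Connected ∧
        ∀ p, IsEdgeProb (cycleGraph n) p → SC (cycleGraph n) p α = (n : ℝ) * α)) ∧
    (2 * ((n : ℝ) - 1) ≤ α →
      ((∀ G : SimpleGraph (Fin n), G.Connected → ∀ p, IsEdgeProb G p →
          ((n : ℝ) - 1) * (α + 2) ≤ SC G p α) ∧
        (_root_.starGraph n).Connected ∧
        ∀ p, IsEdgeProb (_root_.starGraph n) p →
          SC (_root_.starGraph n) p α = ((n : ℝ) - 1) * (α + 2))) := by
  obtain ⟨m, rfl⟩ : ∃ m, n = m + 3 := ⟨n - 3, by omega⟩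
  have hmin : ∀ G : SimpleGraph (Fin (m + 3)), G.Connected → ∀ p, IsEdgeProb G p →
      min (((m + 3 : ℕ) : ℝ) * α) ((((m + 3 : ℕ) : ℝ) - 1) * (α + 2)) ≤ SC G p α :=
    fun G hG p hp => by simpa only [Nat.card_fin] using hG.min_le_SC hp hα.le
  rw [starGraph_eq_starGraph_zero]
  refine ⟨fun hα2 => ⟨fun G hG p hp => (le_min le_rfl ?_).trans (hmin G hG p hp),
      cycleGraph_connected, fun p hp => SC_cycleGraph hp α⟩,
    fun hα2 => ⟨fun G hG p hp => (le_min ?_ le_rfl).trans (hmin G hG p hp),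
      connected_starGraph 0,
      fun p hp => by simpa only [Nat.card_fin] using SC_starGraph 0 hp α⟩⟩
  all_goals nlinarith
end

section
/- In the simple-minded adversary model with unilateral link formation, no Nash equilibrium graph contains a cycle of length ℓ < α + 1/2. -/
/-!
Let `u` be the player who bought the first edge `e` of the cycle, of length `ℓ`, and let her
sell it. This saves `α`, and the graph stays connected because `e` lies on a cycle. Deleting `e`
changes the relevance for `u` only of the `ℓ - 1` other edges of the cycle, each by at most
`n - 1`. Moreover `R(u) ≤ n(n-1)/2`: an edge separating `u` from `w` lies on every shortest
`u`–`w` path, so at most `dist u w` edges separate them, and the distances from `u` to the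
vertices of a shortest path are distinct. With `m ≥ n` edges, the disconnection cost of `u`
therefore rises by at most `R/(m(m-1)) + (ℓ-1)(n-1)/(m-1) ≤ 1/2 + (ℓ - 1)`, so an equilibrium
has `α ≤ ℓ - 1/2`.
-/
open SimpleGraph

/-- The final graph under unilateral link formation: `u` and `v` are linked iff one of
them requested the edge. -/
def finalGraph {V : Type*} [DecidableEq V] (S : V → Finset V) : SimpleGraph V where
  Adj u v := u ≠ v ∧ (v ∈ S u ∨ u ∈ S v)
  symm := ⟨by rintro u v ⟨h1, h2⟩; exact ⟨h1.symm, h2.symm⟩⟩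
  loopless := ⟨fun u h => h.1 rfl⟩

/-- Individual cost of player `v`: building cost `|S v|·α` plus disconnection cost
`(1/m)·R(v)` under the simple-minded adversary. -/
noncomputable def cost {V : Type*} [DecidableEq V] (α : ℝ) (S : V → Finset V) (v : V) : ℝ :=
  (S v).card * α +
    (∑ᶠ e ∈ (finalGraph S).edgeSet, (rel (finalGraph S) e v : ℝ)) /
      (Nat.card (finalGraph S).edgeSet : ℝ)

/-- Nash equilibrium: the final graph is connected (else disconnection cost is `∞`), and
no player can strictly improve by changing her own strategy (deviations producing a
disconnected graph incur infinite cost and hence are never improvements). -/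
def IsNE {V : Type*} [DecidableEq V] (α : ℝ) (S : V → Finset V) : Prop :=
  (finalGraph S).Connected ∧
    ∀ (v : V) (S' : V → Finset V), (∀ u, u ≠ v → S' u = S u) →
      (finalGraph S').Connected → cost α S v ≤ cost α S' v

open Finset

namespace SimpleGraph

variable {V : Type*} {G : SimpleGraph V}

theorem reachable_deleteEdges_iff_of_mem_edges_isCycle {a : V} {C : G.Walk a a}
    (hC : C.IsCycle) {e : Sym2 V} (he : e ∈ C.edges) {x y : V} :
    (G.deleteEdges {e}).Reachable x y ↔ G.Reachable x y := by
  refine ⟨fun h => h.mono (deleteEdges_le _), fun h => ?_⟩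
  obtain ⟨p⟩ := h
  induction e with | h u w =>
  have huw : (G.deleteEdges {s(u, w)}).Reachable u w :=
    (adj_and_reachable_delete_edges_iff_exists_cycle.mpr ⟨a, C, hC, he⟩).2
  induction p with
  | nil => rfl
  | @cons x z y hxz _ ih =>
    refine Reachable.trans ?_ ih
    by_cases hxz' : s(x, z) = s(u, w)
    · rcases Sym2.eq_iff.mp hxz' with ⟨rfl, rfl⟩ | ⟨rfl, rfl⟩
      exacts [huw, huw.symm]
    · exact (deleteEdges_adj.mpr ⟨hxz, hxz'⟩).reachable

theorem Connected.deleteEdges_of_mem_edges_isCycle (hG : G.Connected) {a : V} {C : G.Walk a a}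
    (hC : C.IsCycle) {e : Sym2 V} (he : e ∈ C.edges) : (G.deleteEdges {e}).Connected := by
  induction e with | h u w =>
  exact hG.connected_delete_edge_of_not_isBridge fun hb => hb.notMem_edges_of_isCycle hC he

theorem card_edgeSet_deleteEdges_add_one [Finite V] {e : Sym2 V} (he : e ∈ G.edgeSet) :
    Nat.card (G.deleteEdges {e}).edgeSet + 1 = Nat.card G.edgeSet := by
  rw [Nat.card_coe_set_eq, Nat.card_coe_set_eq, edgeSet_deleteEdges,
    Set.ncard_sdiff_singleton_add_one he]

theorem dist_le_card_filter_dist_lt [Fintype V] (G : SimpleGraph V) (v w : V) :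
    G.dist v w ≤ #{x | G.dist v x < G.dist v w} := by
  by_cases h : G.Reachable v w
  swap
  · simp [dist_eq_zero_of_not_reachable h]
  obtain ⟨p, hp⟩ := h.exists_walk_length_eq_dist
  have hdist : ∀ i ≤ G.dist v w, G.dist v (p.getVert i) = i := fun i hi => by
    rw [← length_eq_dist_of_subwalk hp (p.isSubwalk_take i), Walk.take_length, hp]
    exact min_eq_left hi
  calc G.dist v w = #(range (G.dist v w)) := (card_range _).symm
    _ ≤ _ := card_le_card_of_injOn p.getVert
      (fun i hi => by
        simp only [coe_range, Set.mem_Iio, coe_filter, mem_univ, true_and,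
          Set.mem_ofPred_eq] at hi ⊢
        rwa [hdist i hi.le])
      (fun i hi j hj hij => by
        simp only [coe_range, Set.mem_Iio] at hi hj
        rw [← hdist i hi.le, ← hdist j hj.le, hij])

theorem card_filter_not_reachable_deleteEdges_le_dist [DecidableEq V] {v w : V}
    (h : G.Reachable v w) (s : Finset (Sym2 V))
    [DecidablePred fun e => ¬(G.deleteEdges {e}).Reachable v w] :
    #{e ∈ s | ¬(G.deleteEdges {e}).Reachable v w} ≤ G.dist v w := by
  obtain ⟨p, hp, hlen⟩ := h.exists_path_of_dist
  calc #{e ∈ s | ¬(G.deleteEdges {e}).Reachable v w} ≤ #p.edges.toFinset := by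
        refine card_le_card fun e he => List.mem_toFinset.mpr (not_not.mp fun hep => ?_)
        exact (mem_filter.mp he).2
          ⟨p.toDeleteEdges {e} fun f hf hfe => hep (Set.mem_singleton_iff.mp hfe ▸ hf)⟩
    _ = G.dist v w := by
        rw [List.toFinset_card_of_nodup hp.isTrail.edges_nodup, Walk.length_edges, hlen]

end SimpleGraph

section Counting

variable {α β : Type*} [Fintype α] [DecidableEq α] [LinearOrder β]

theorem two_mul_sum_card_filter_lt_le (f : α → β) :
    2 * ∑ w, #{x | f x < f w} ≤ Fintype.card α * (Fintype.card α - 1) := by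
  have hswap : ∑ w, #{x | f w < f x} = ∑ w, #{x | f x < f w} := by
    simp only [card_filter]
    exact sum_comm
  have hw : ∀ w, #{x | f x < f w} + #{x | f w < f x} ≤ Fintype.card α - 1 := fun w => by
    rw [← card_union_of_disjoint (disjoint_filter.mpr fun x _ h h' => lt_asymm h h')]
    calc _ ≤ #(univ.erase w) := card_le_card fun x hx => by
          simp only [mem_union, mem_filter, mem_univ, true_and] at hx
          exact mem_erase.mpr ⟨by rintro rfl; simp at hx, mem_univ x⟩
      _ = Fintype.card α - 1 := by rw [card_erase_of_mem (mem_univ w), card_univ]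
  calc 2 * ∑ w, #{x | f x < f w} = ∑ w, (#{x | f x < f w} + #{x | f w < f x}) := by
        rw [sum_add_distrib, hswap, two_mul]
    _ ≤ ∑ _w : α, (Fintype.card α - 1) := sum_le_sum fun w _ => hw w
    _ = Fintype.card α * (Fintype.card α - 1) := by rw [sum_const, card_univ, smul_eq_mul]

end Counting

section Relevance

variable {V : Type*} {G : SimpleGraph V}

theorem rel_le_card_sub_one [Finite V] (e : Sym2 V) (v : V) :
    rel G e v ≤ Nat.card V - 1 := by
  have hsub : {w | ¬(G.deleteEdges {e}).Reachable v w} ⊆ Set.univ \ {v} :=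
    fun w hw => ⟨trivial, fun hwv => hw (by rw [Set.mem_singleton_iff.mp hwv])⟩
  calc rel G e v = {w | ¬(G.deleteEdges {e}).Reachable v w}.ncard := rfl
    _ ≤ (Set.univ \ {v}).ncard := Set.ncard_le_ncard hsub
    _ = Nat.card V - 1 := by
        rw [Set.ncard_sdiff_singleton_of_mem (Set.mem_univ v), Set.ncard_univ]

theorem RSum_eq_sum {s : Finset (Sym2 V)} (hs : (s : Set (Sym2 V)) = G.edgeSet) (v : V) :
    RSum G v = ∑ e ∈ s, rel G e v := by
  rw [RSum, ← hs, finsum_mem_coe_finset]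

theorem sum_rel_le_sum_dist [Fintype V] (hG : G.Connected) (s : Finset (Sym2 V)) (v : V) :
    ∑ e ∈ s, rel G e v ≤ ∑ w, G.dist v w := by
  classical
  calc ∑ e ∈ s, rel G e v = ∑ w, #{e ∈ s | ¬(G.deleteEdges {e}).Reachable v w} := by
        simp only [rel, Nat.card_eq_fintype_card, Fintype.card_subtype, card_filter]
        exact sum_comm
    _ ≤ ∑ w, G.dist v w :=
        sum_le_sum fun w _ => card_filter_not_reachable_deleteEdges_le_dist (hG v w) s

theorem two_mul_RSum_le [Finite V] (hG : G.Connected) (v : V) :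
    2 * RSum G v ≤ Nat.card V * (Nat.card V - 1) := by
  classical
  have := Fintype.ofFinite V
  rw [RSum_eq_sum G.edgeSet.toFinite.coe_toFinset v, Nat.card_eq_fintype_card]
  calc 2 * ∑ e ∈ G.edgeSet.toFinite.toFinset, rel G e v ≤ 2 * ∑ w, G.dist v w := by
        gcongr; exact sum_rel_le_sum_dist hG _ v
    _ ≤ 2 * ∑ w, #{x | G.dist v x < G.dist v w} := by
        gcongr with w; exact G.dist_le_card_filter_dist_lt v w
    _ ≤ _ := two_mul_sum_card_filter_lt_le _

theorem rel_deleteEdges_of_notMem_edges {a : V} {C : G.Walk a a} (hC : C.IsCycle)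
    {e f : Sym2 V} (he : e ∈ C.edges) (hf : f ∉ C.edges) (v : V) :
    rel (G.deleteEdges {e}) f v = rel G f v := by
  have hCf : ∀ g ∈ C.edges, g ∈ (G.deleteEdges {f}).edgeSet := fun g hg => by
    rw [edgeSet_deleteEdges]
    exact ⟨C.edges_subset_edgeSet hg, fun hgf => hf (Set.mem_singleton_iff.mp hgf ▸ hg)⟩
  have hcomm : (G.deleteEdges {e}).deleteEdges {f} = (G.deleteEdges {f}).deleteEdges {e} := by
    rw [deleteEdges_deleteEdges, deleteEdges_deleteEdges, Set.union_comm]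
  have he' : e ∈ (C.transfer _ hCf).edges := by rwa [Walk.edges_transfer]
  simp only [rel, hcomm, reachable_deleteEdges_iff_of_mem_edges_isCycle (hC.transfer hCf) he']

theorem RSum_deleteEdges_le [Finite V] {a : V} {C : G.Walk a a} (hC : C.IsCycle) {e : Sym2 V}
    (he : e ∈ C.edges) (v : V) :
    RSum (G.deleteEdges {e}) v ≤ RSum G v + (C.length - 1) * (Nat.card V - 1) := by
  classical
  set E := G.edgeSet.toFinite.toFinset
  have hE : (E : Set (Sym2 V)) = G.edgeSet := G.edgeSet.toFinite.coe_toFinset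
  have hE' : ((E.erase e : Finset (Sym2 V)) : Set (Sym2 V)) = (G.deleteEdges {e}).edgeSet := by
    rw [coe_erase, hE, edgeSet_deleteEdges]
  have hcycle : #{f ∈ E.erase e | f ∈ C.edges} ≤ C.length - 1 := by
    calc _ ≤ #(C.edges.toFinset.erase e) := card_le_card fun f hf => by
          rw [mem_filter, mem_erase] at hf
          exact mem_erase.mpr ⟨hf.1.1, List.mem_toFinset.mpr hf.2⟩
      _ = C.length - 1 := by
          rw [card_erase_of_mem (List.mem_toFinset.mpr he),
            List.toFinset_card_of_nodup hC.isCircuit.isTrail.edges_nodup, Walk.length_edges]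
  have hon : ∑ f ∈ E.erase e with f ∈ C.edges, rel (G.deleteEdges {e}) f v ≤
      (C.length - 1) * (Nat.card V - 1) := by
    calc _ ≤ #{f ∈ E.erase e | f ∈ C.edges} • (Nat.card V - 1) :=
          sum_le_card_nsmul _ _ _ fun f _ => rel_le_card_sub_one f v
      _ ≤ _ := by rw [smul_eq_mul]; gcongr
  have hoff : ∑ f ∈ E.erase e with f ∉ C.edges, rel (G.deleteEdges {e}) f v ≤ RSum G v := by
    rw [RSum_eq_sum hE]
    calc _ = ∑ f ∈ E.erase e with f ∉ C.edges, rel G f v :=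
          sum_congr rfl fun f hf => rel_deleteEdges_of_notMem_edges hC he (mem_filter.mp hf).2 v
      _ ≤ _ := sum_le_sum_of_subset ((filter_subset _ _).trans (erase_subset _ _))
  rw [RSum_eq_sum hE', ← sum_filter_add_sum_filter_not _ (· ∈ C.edges)]
  omega

end Relevance

theorem div_sub_div_add_one_le_sub_half {R R' n m ℓ : ℝ} (hR : 0 ≤ R)
    (hR' : R' ≤ R + (ℓ - 1) * (n - 1)) (hRn : 2 * R ≤ n * (n - 1)) (hn : 0 ≤ n)
    (hnm : n ≤ m + 1) (hm : 0 ≤ m) (hℓ : 1 ≤ ℓ) :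
    R' / m - R / (m + 1) ≤ ℓ - 1 / 2 := by
  rcases hm.eq_or_lt with rfl | hm
  · simp only [div_zero, zero_add, div_one, zero_sub]
    linarith
  have hsplit : (R + (ℓ - 1) * (n - 1)) / m - R / (m + 1) =
      R / (m * (m + 1)) + (ℓ - 1) * (n - 1) / m := by
    field_simp
    ring
  have h1 : R / (m * (m + 1)) ≤ 1 / 2 := by
    rw [div_le_iff₀ (by positivity)]
    nlinarith
  have h2 : (ℓ - 1) * (n - 1) / m ≤ ℓ - 1 := by
    rw [div_le_iff₀ hm]
    nlinarith
  have h3 : R' / m ≤ (R + (ℓ - 1) * (n - 1)) / m := div_le_div_of_nonneg_right hR' hm.le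
  linarith

section Equilibrium

variable {V : Type*}

noncomputable def disconnectionCost (G : SimpleGraph V) (v : V) : ℝ :=
  RSum G v / Nat.card G.edgeSet

theorem disconnectionCost_deleteEdges_sub_le [Finite V] {G : SimpleGraph V} (hG : G.Connected)
    {a : V} {C : G.Walk a a} (hC : C.IsCycle) {e : Sym2 V} (he : e ∈ C.edges) (v : V) :
    disconnectionCost (G.deleteEdges {e}) v - disconnectionCost G v ≤ C.length - 1 / 2 := by
  have hm := card_edgeSet_deleteEdges_add_one (C.edges_subset_edgeSet he)
  have hnm := (hG.deleteEdges_of_mem_edges_isCycle hC he).card_vert_le_card_edgeSet_add_one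
  have hR := two_mul_RSum_le hG v
  have hR' := RSum_deleteEdges_le hC he v
  have hℓ : 1 ≤ C.length := by linarith [hC.three_le_length]
  have hn : 1 ≤ Nat.card V := Nat.card_pos_iff.mpr ⟨⟨a⟩, inferInstance⟩
  rw [disconnectionCost, disconnectionCost, ← hm]
  push_cast
  apply div_sub_div_add_one_le_sub_half (n := Nat.card V) (by positivity) _ _ (by positivity)
    (by exact_mod_cast hnm) (by positivity) (by exact_mod_cast hℓ)
  · have := (Nat.cast_le (α := ℝ)).mpr hR'
    push_cast [Nat.cast_sub hℓ, Nat.cast_sub hn] at this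
    exact this
  · have := (Nat.cast_le (α := ℝ)).mpr hR
    push_cast [Nat.cast_sub hn] at this
    exact this

theorem cost_eq [Finite V] [DecidableEq V] (α : ℝ) (S : V → Finset V) (v : V) :
    cost α S v = (S v).card * α + disconnectionCost (finalGraph S) v := by
  rw [cost, disconnectionCost, RSum, Nat.cast_finsum_mem (finalGraph S).edgeSet.toFinite]

theorem finalGraph_update_erase [DecidableEq V] (S : V → Finset V) (u w : V) :
    finalGraph (Function.update S u ((S u).erase w)) =
      if u ∈ S w then finalGraph S else (finalGraph S).deleteEdges {s(u, w)} := by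
  ext x y
  split_ifs with h
  · simp only [finalGraph, Function.update_apply]
    grind
  · simp only [finalGraph, deleteEdges_adj, Function.update_apply, Set.mem_singleton_iff,
      Sym2.eq_iff]
    grind

theorem IsNE.le_length_sub_half [Finite V] [DecidableEq V] {α : ℝ} {S : V → Finset V}
    (hNE : IsNE α S) {a : V} {C : (finalGraph S).Walk a a} (hC : C.IsCycle) {u w : V}
    (hbuy : w ∈ S u) (he : s(u, w) ∈ C.edges) : α ≤ C.length - 1 / 2 := by
  set S' := Function.update S u ((S u).erase w)
  have hG' : finalGraph S' = _ := finalGraph_update_erase S u w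
  have hcard : ((S' u).card : ℝ) = (S u).card - 1 := by
    rw [show S' u = (S u).erase w from Function.update_self .., ← card_erase_add_one hbuy]
    push_cast
    ring
  have hconn' : (finalGraph S').Connected := by
    rw [hG']
    split_ifs
    exacts [hNE.1, hNE.1.deleteEdges_of_mem_edges_isCycle hC he]
  have hle := hNE.2 u S' (fun z hz => Function.update_of_ne hz _ _) hconn'
  have hdel := disconnectionCost_deleteEdges_sub_le hNE.1 hC he u
  have hℓ : (3 : ℝ) ≤ C.length := by exact_mod_cast hC.three_le_length
  rw [cost_eq, cost_eq, hcard, hG'] at hle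
  split_ifs at hle <;> linarith

end Equilibrium

theorem stmt_19_general {V : Type*} [Fintype V] [DecidableEq V] (α : ℝ)
    (S : V → Finset V) (hNE : IsNE α S) (a : V)
    (C : (finalGraph S).Walk a a) (hC : C.IsCycle)
    (hshort : (C.length : ℝ) < α + 1 / 2) : False := by
  have he := C.mk_start_snd_mem_edges hC.not_nil
  obtain ⟨-, hbuy | hbuy⟩ := C.adj_snd hC.not_nil
  · linarith [hNE.le_length_sub_half hC hbuy he]
  · linarith [hNE.le_length_sub_half hC hbuy (Sym2.eq_swap ▸ he)]

/-- In the simple-minded adversary model with unilateral link formation, no Nash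
equilibrium graph contains a cycle of length `ℓ < α + 1/2`. -/
theorem stmt_19 {V : Type*} [Fintype V] [DecidableEq V] (α : ℝ) (hα : 0 < α)
    (S : V → Finset V) (hNE : IsNE α S) (a : V)
    (C : (finalGraph S).Walk a a) (hC : C.IsCycle)
    (hshort : (C.length : ℝ) < α + 1 / 2) : False :=
  stmt_19_general α S hNE a C hC hshort
end
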